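/- Let p > 1, a > 0 and b ∈ ℝ with p(1+a)+b = 0. Assume (f,g) ∈ C²(ℝ)×C¹(ℝ) with supp f, supp g ⊂ {x : |x| ≤ R}, R ≥ 1, and ∫_ℝ g(x)dx > 0. Then there exist constants ε₂ = ε₂(g,p,a,b,R) > 0 and C > 0 independent of ε such that for every 0 < ε ≤ ε₂ and every T ≥ exp(C ε^{−p(p−1)}), there is no continuous solution U ∈ C(ℝ×[0,T]) with supp U ⊂ {(x,t) : |x| ≤ t+R} of the integral equation U = ε u_t⁰ + L'_{a,b}(|U|^p). -/

import Mathlib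

open MeasureTheory Set
open scoped Classical

/-- Japanese bracket `⟨x⟩ = √(1+x²)`. -/
noncomputable def jb (x : ℝ) : ℝ := Real.sqrt (1 + x ^ 2)

/-- The operator `L'_{a,b}`. -/
noncomputable def Lab' (a b : ℝ) (v : ℝ → ℝ → ℝ) (x t : ℝ) : ℝ :=
    (1 / 2) * (∫ s in (0:ℝ)..t,
      v (x + t - s) s /
        (jb (s + jb (x + t - s)) ^ (1 + a) * jb (s - jb (x + t - s)) ^ (1 + b)))
  + (1 / 2) * (∫ s in (0:ℝ)..t,
      v (x - t + s) s /
        (jb (s + jb (x - t + s)) ^ (1 + a) * jb (s - jb (x - t + s)) ^ (1 + b)))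

/-- `u_t⁰(x,t) = (1/2){f'(x+t) − f'(x−t) + g(x+t) + g(x−t)}`. -/
noncomputable def ut0 (f g : ℝ → ℝ) (x t : ℝ) : ℝ :=
  (1 / 2) * (deriv f (x + t) - deriv f (x - t) + g (x + t) + g (x - t))

/-- Indicator `χ(x,t)` of the region `t − |x| > R`. -/
noncomputable def chiR (R x t : ℝ) : ℝ := if R < t - |x| then 1 else 0

/-- The weight function `w(x,t)`. -/
noncomputable def wgt (a R x t : ℝ) : ℝ :=
  if 0 < a then chiR R x t * (1 + t - |x|) ^ (1 + a) + (1 - chiR R x t)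
  else if a = 0 then
    chiR R x t * (1 + t - |x|) + (1 - chiR R x t) / Real.log (t + |x| + R)
  else if -1 ≤ a then
    chiR R x t * (1 + t - |x|) ^ (1 + a) + (1 - chiR R x t) * (t + |x| + R) ^ a
  else chiR R x t * (1 + t + |x|) ^ (1 + a) + (1 - chiR R x t) * (t + |x| + R) ^ a

/-- The weighted sup-norm `‖U‖ = sup_{ℝ×[0,T]} |w(x,t)U(x,t)|`. -/
noncomputable def wnorm (a R T : ℝ) (U : ℝ → ℝ → ℝ) : ℝ :=
  ⨆ q : ℝ × Set.Icc (0:ℝ) T, |wgt a R q.1 (q.2 : ℝ) * U q.1 (q.2 : ℝ)|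

/-- The quantity `E_{a,b}(T)`. -/
noncomputable def Eab (p a b R T : ℝ) : ℝ :=
  if 0 < a ∧ 0 < p * (1 + a) + b then 1
  else if a = 0 ∧ -p ≤ b then Real.log (T + 3 * R) ^ p
  else if 0 < a ∧ p * (1 + a) + b = 0 then Real.log (T + 3 * R)
  else if a < 0 ∧ -p ≤ b then (T + 2 * R) ^ (-(a * p))
  else (T + 2 * R) ^ (-(p * (1 + a)) - b)

/-- The quantity `D_a(T)`. -/
noncomputable def Da (a R T : ℝ) : ℝ :=
  if 0 < a then 1
  else if a = 0 then Real.log (T + 3 * R)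
  else (T + 2 * R) ^ (-a)

/-- The five regimes of parameters `(a,b)` appearing in the lifespan estimates. -/
def Regime (p a b : ℝ) : Prop :=
  (0 < a ∧ 0 < p * (1 + a) + b) ∨ (a = 0 ∧ -p ≤ b) ∨
  (0 < a ∧ p * (1 + a) + b = 0) ∨ (a < 0 ∧ -p ≤ b) ∨
  (p * (1 + a) + b < 0 ∧ b < -p)

/-- `u` is a classical solution of the IVP
`u_tt − u_xx = |u_t|^p / (⟨t+⟨x⟩⟩^{1+a}⟨t−⟨x⟩⟩^{1+b})` on `ℝ × [0,T]`
with data `u(x,0) = εf(x)`, `u_t(x,0) = εg(x)`. -/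
def IsClassicalSol (p a b ε T : ℝ) (f g : ℝ → ℝ) (u : ℝ → ℝ → ℝ) : Prop :=
  ContDiffOn ℝ 2 (fun q : ℝ × ℝ => u q.1 q.2)
    ((Set.univ : Set ℝ) ×ˢ Set.Icc (0:ℝ) T) ∧
  (∀ x t : ℝ, 0 < t → t < T →
    deriv (deriv (fun τ => u x τ)) t - deriv (deriv (fun y => u y t)) x
      = |deriv (fun τ => u x τ) t| ^ p /
          (jb (t + jb x) ^ (1 + a) * jb (t - jb x) ^ (1 + b))) ∧
  (∀ x : ℝ, u x 0 = ε * f x) ∧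
  (∀ x : ℝ, deriv (fun τ => u x τ) 0 = ε * g x)

/-- `U` is a continuous solution, supported in `{|x| ≤ t+R}`, of the integral
equation `U = ε u_t⁰ + L'_{a,b}(|U|^p)` on `ℝ × [0,T]`. -/
def IsIntSol (p a b R ε T : ℝ) (f g : ℝ → ℝ) (U : ℝ → ℝ → ℝ) : Prop :=
  ContinuousOn (fun q : ℝ × ℝ => U q.1 q.2)
    ((Set.univ : Set ℝ) ×ˢ Set.Icc (0:ℝ) T) ∧
  (∀ x t : ℝ, 0 ≤ t → t ≤ T → t + R < |x| → U x t = 0) ∧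
  (∀ x t : ℝ, 0 ≤ t → t ≤ T →
    U x t = ε * ut0 f g x t + Lab' a b (fun y s => |U y s| ^ p) x t)


/-!
Since `∫ f' = 0`, the data satisfy `f' + g ≥ c > 0` on some `[y₁, y₂] ⊆ [-R, R]`. As `L'_{a,b}` is
positive, `U ≥ ε u_t⁰ = ε (f' + g)(x + t) / 2` on the strip `x + t ∈ [y₁, y₂]`, and integrating
`|U|^p` along the backward characteristics that cross this strip gives
`U ≥ N₀ (t - |x|)^{-(1+a)}` deep inside the cone, with `N₀ ≍ ε^p`. On the critical line
`p(1+a) + b = 0` the kernel turns `(t - |x|)^{-(1+a)p}` into `(t - |x|)^{-1}` along a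
characteristic, so each further integration improves a bound `N log((t-|x|)/K)^k (t-|x|)^{-(1+a)}`
(with `K = 3R + 3`) to one with `N ↦ c N^p / (kp + 1)` and `k ↦ kp + 1`; the symmetry `x ↦ -x`
lets a single step serve both halves of the cone. With `ℓ = log log (T/K)`, the quantity
`log N + (k + 1/(p-1)) ℓ` then grows like `p^m` once `ℓ` exceeds `-p(p-1) log ε` by a fixed
constant, which is what `T ≥ exp(C ε^{-p(p-1)})` provides; so the lower bounds for `U(0, T)` are
unbounded.
-/

open Filter

lemma jb_neg (x : ℝ) : jb (-x) = jb x := by simp [jb]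

lemma one_le_jb (x : ℝ) : 1 ≤ jb x :=
  Real.one_le_sqrt.mpr (by nlinarith)

lemma jb_pos (x : ℝ) : 0 < jb x := one_pos.trans_le (one_le_jb x)

lemma abs_le_jb (x : ℝ) : |x| ≤ jb x :=
  Real.abs_le_sqrt (by nlinarith)

lemma jb_le_abs_add_one (x : ℝ) : jb x ≤ |x| + 1 :=
  Real.sqrt_le_iff.mpr ⟨by positivity, by nlinarith [sq_abs x, abs_nonneg x]⟩

lemma continuous_jb : Continuous jb := by
  unfold jb; fun_prop

noncomputable def kernelDenom (a b y s : ℝ) : ℝ :=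
  jb (s + jb y) ^ (1 + a) * jb (s - jb y) ^ (1 + b)

lemma kernelDenom_pos (a b y s : ℝ) : 0 < kernelDenom a b y s := by
  unfold kernelDenom
  have := jb_pos (s + jb y); have := jb_pos (s - jb y)
  positivity

lemma continuous_kernelDenom (a b : ℝ) {w : ℝ → ℝ} (hw : Continuous w) :
    Continuous fun s => kernelDenom a b (w s) s := by
  unfold kernelDenom
  have h := continuous_jb.comp hw
  exact ((continuous_jb.comp (continuous_id.add h)).rpow_const fun s => Or.inl (jb_pos _).ne').mul
    ((continuous_jb.comp (continuous_id.sub h)).rpow_const fun s => Or.inl (jb_pos _).ne')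

lemma jb_add_jb_rpow_le {a : ℝ} (ha : 0 ≤ 1 + a) (y s : ℝ) :
    jb (s + jb y) ^ (1 + a) ≤ (|s| + |y| + 2) ^ (1 + a) := by
  refine Real.rpow_le_rpow (jb_pos _).le ?_ ha
  have := abs_add_le s (jb y)
  rw [abs_of_pos (jb_pos y)] at this
  linarith [jb_le_abs_add_one (s + jb y), jb_le_abs_add_one y]

lemma kernelDenom_le {a b : ℝ} (ha : 0 ≤ 1 + a) (hb : 1 + b ≤ 0) (y s : ℝ) :
    kernelDenom a b y s ≤ (|s| + |y| + 2) ^ (1 + a) :=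
  (mul_le_of_le_one_right (Real.rpow_nonneg (jb_pos _).le _)
    (Real.rpow_le_one_of_one_le_of_nonpos (one_le_jb _) hb)).trans (jb_add_jb_rpow_le ha y s)

lemma kernelDenom_le_of_two_le {a b y s : ℝ} (ha : 0 ≤ 1 + a) (hb : 1 + b ≤ 0)
    (hys : 2 ≤ s - |y|) :
    kernelDenom a b y s ≤ (|s| + |y| + 2) ^ (1 + a) * ((s - |y|) / 2) ^ (1 + b) := by
  have h : (s - |y|) / 2 ≤ jb (s - jb y) := by
    linarith [abs_le_jb (s - jb y), le_abs_self (s - jb y), jb_le_abs_add_one y]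
  exact mul_le_mul (jb_add_jb_rpow_le ha y s) (Real.rpow_le_rpow_of_nonpos (by linarith) h hb)
    (Real.rpow_nonneg (jb_pos _).le _) (by positivity)

lemma Lab'_nonneg {a b t : ℝ} {v : ℝ → ℝ → ℝ} (hv : ∀ y s, 0 ≤ v y s) (ht : 0 ≤ t) (x : ℝ) :
    0 ≤ Lab' a b v x t := by
  have hk := kernelDenom_pos a b
  have h1 := intervalIntegral.integral_nonneg (μ := volume) ht
    fun s _ => div_nonneg (hv (x + t - s) s) (hk (x + t - s) s).le
  have h2 := intervalIntegral.integral_nonneg (μ := volume) ht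
    fun s _ => div_nonneg (hv (x - t + s) s) (hk (x - t + s) s).le
  unfold Lab'
  exact add_nonneg (mul_nonneg (by norm_num) h1) (mul_nonneg (by norm_num) h2)

lemma Lab'_comp_neg (a b : ℝ) (v : ℝ → ℝ → ℝ) (x t : ℝ) :
    Lab' a b (fun y s => v (-y) s) x t = Lab' a b v (-x) t := by
  unfold Lab'
  rw [add_comm]
  congr 2 <;> refine intervalIntegral.integral_congr fun s _ => ?_ <;> dsimp only
  · rw [← jb_neg (x - t + s)]; ring_nf
  · rw [← jb_neg (x + t - s)]; ring_nf

lemma ut0_comp_neg (f g : ℝ → ℝ) (x t : ℝ) :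
    ut0 (fun y => f (-y)) (fun y => g (-y)) x t = ut0 f g (-x) t := by
  simp only [ut0, deriv_comp_neg]
  ring_nf

section IntSol

variable {p a b R ε T : ℝ} {f g : ℝ → ℝ} {U : ℝ → ℝ → ℝ}

theorem IsIntSol.comp_neg (hU : IsIntSol p a b R ε T f g U) :
    IsIntSol p a b R ε T (fun y => f (-y)) (fun y => g (-y)) (fun y s => U (-y) s) := by
  obtain ⟨hc, hsupp, heq⟩ := hU
  refine ⟨?_, fun x t h0 hT hx => hsupp (-x) t h0 hT (by rwa [abs_neg]), fun x t h0 hT => ?_⟩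
  · exact hc.comp (continuous_neg.prodMap continuous_id).continuousOn
      fun q (hq : q ∈ univ ×ˢ Icc 0 T) => ⟨trivial, hq.2⟩
  · have h := Lab'_comp_neg a b (fun y s => |U y s| ^ p) x t
    dsimp only at h ⊢
    rw [h, ut0_comp_neg]
    exact heq (-x) t h0 hT

theorem IsIntSol.mul_ut0_le (hU : IsIntSol p a b R ε T f g U) {x t : ℝ} (ht : 0 ≤ t)
    (hT : t ≤ T) : ε * ut0 f g x t ≤ U x t := by
  rw [hU.2.2 x t ht hT]
  linarith [Lab'_nonneg (a := a) (b := b) (fun y s => by positivity : ∀ y s, 0 ≤ |U y s| ^ p) ht x]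

theorem IsIntSol.integral_le (hp : 0 < p) (hU : IsIntSol p a b R ε T f g U) {x t s₁ s₂ : ℝ}
    {φ : ℝ → ℝ} (hz : ut0 f g x t = 0) (h₀ : 0 ≤ s₁) (h₁₂ : s₁ ≤ s₂) (h₂ : s₂ ≤ t) (hT : t ≤ T)
    (hφ₀ : ∀ s ∈ Icc s₁ s₂, 0 ≤ φ s)
    (hφ : ∀ s ∈ Icc s₁ s₂, φ s ≤ |U (x - t + s) s| ^ p / kernelDenom a b (x - t + s) s) :
    (∫ s in s₁..s₂, φ s) / 2 ≤ U x t := by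
  set F : ℝ → ℝ := fun s => |U (x - t + s) s| ^ p / kernelDenom a b (x - t + s) s
  have hF₀ : ∀ s, 0 ≤ F s := fun s => div_nonneg (by positivity) (kernelDenom_pos _ _ _ _).le
  have ht : 0 ≤ t := h₀.trans (h₁₂.trans h₂)
  have hFc : ContinuousOn F (Icc 0 t) := by
    have hUc : ContinuousOn (fun s => U (x - t + s) s) (Icc 0 t) :=
      hU.1.comp (f := fun s => (x - t + s, s)) (by fun_prop)
        fun s hs => ⟨trivial, hs.1, hs.2.trans hT⟩
    refine ((hUc.abs).rpow_const fun _ _ => Or.inr hp.le).div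
      (continuous_kernelDenom a b (by fun_prop)).continuousOn fun s _ => ?_
    exact (kernelDenom_pos _ _ _ _).ne'
  have hFi : IntervalIntegrable F volume 0 t :=
    (hFc.mono (by rw [uIcc_of_le ht])).intervalIntegrable
  have hφF : (∫ s in s₁..s₂, φ s) ≤ ∫ s in s₁..s₂, F s := by
    rw [intervalIntegral.integral_of_le h₁₂, intervalIntegral.integral_of_le h₁₂]
    refine integral_mono_of_nonneg ?_ ?_ ?_
    · exact (ae_restrict_iff' measurableSet_Ioc).mpr
        (Eventually.of_forall fun s hs => hφ₀ s (Ioc_subset_Icc_self hs))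
    · exact ((hFc.mono (Icc_subset_Icc h₀ h₂)).integrableOn_Icc).mono_set Ioc_subset_Icc_self
    · exact (ae_restrict_iff' measurableSet_Ioc).mpr
        (Eventually.of_forall fun s hs => hφ s (Ioc_subset_Icc_self hs))
  have hFt : (∫ s in s₁..s₂, F s) ≤ ∫ s in (0:ℝ)..t, F s :=
    intervalIntegral.integral_mono_interval h₀ h₁₂ h₂ (Eventually.of_forall hF₀) hFi
  have hI : 0 ≤ ∫ s in (0:ℝ)..t, |U (x + t - s) s| ^ p / kernelDenom a b (x + t - s) s :=
    intervalIntegral.integral_nonneg ht fun s _ =>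
      div_nonneg (by positivity) (kernelDenom_pos _ _ _ _).le
  rw [hU.2.2 x t ht hT, hz]
  change _ ≤ ε * 0 + ((1 / 2) * (∫ s in (0:ℝ)..t, |U (x + t - s) s| ^ p /
    kernelDenom a b (x + t - s) s) + (1 / 2) * ∫ s in (0:ℝ)..t, F s)
  linarith

end IntSol

section Data

variable {R : ℝ} {f g : ℝ → ℝ}

lemma deriv_eq_zero_of_lt_abs (hsf : ∀ x : ℝ, R < |x| → f x = 0) {z : ℝ} (hz : R < |z|) :
    deriv f z = 0 := by
  have hev : f =ᶠ[nhds z] fun _ => 0 :=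
    eventually_of_mem ((isOpen_lt continuous_const continuous_abs).mem_nhds hz) hsf
  rw [hev.deriv_eq, deriv_const]

lemma hasCompactSupport_of_lt_abs (hsf : ∀ x : ℝ, R < |x| → f x = 0) : HasCompactSupport f :=
  HasCompactSupport.intro (isCompact_Icc (a := -R) (b := R))
    fun x hx => hsf x (lt_of_not_ge fun h => hx (abs_le.mp h))

variable (hsf : ∀ x : ℝ, R < |x| → f x = 0) (hsg : ∀ x : ℝ, R < |x| → g x = 0)
include hsf hsg

lemma ut0_eq_of_sub_lt {x t : ℝ} (h : x - t < -R) :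
    ut0 f g x t = (deriv f (x + t) + g (x + t)) / 2 := by
  have hR : R < |x - t| := by linarith [neg_le_abs (x - t)]
  rw [ut0, deriv_eq_zero_of_lt_abs hsf hR, hsg _ hR]
  ring

lemma ut0_eq_zero {x t : ℝ} (h₁ : R < x + t) (h₂ : x - t < -R) : ut0 f g x t = 0 := by
  have hR : R < |x + t| := h₁.trans_le (le_abs_self _)
  rw [ut0_eq_of_sub_lt hsf hsg h₂, deriv_eq_zero_of_lt_abs hsf hR, hsg _ hR]
  ring

/-- Since `∫ f' = 0`, the hypothesis `∫ g > 0` makes `f' + g` positive somewhere. -/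
lemma exists_Icc_le_deriv_add (hf : ContDiff ℝ 1 f) (hg : Continuous g) (hgint : 0 < ∫ x, g x) :
    ∃ y₁ y₂ c : ℝ, y₁ < y₂ ∧ 0 < c ∧ -R ≤ y₁ ∧ y₂ ≤ R ∧
      ∀ y ∈ Icc y₁ y₂, c ≤ deriv f y + g y := by
  have hdf := hf.continuous_deriv le_rfl
  have hsdf : ∀ x : ℝ, R < |x| → deriv f x = 0 := fun x => deriv_eq_zero_of_lt_abs hsf
  have hidf : Integrable (deriv f) :=
    hdf.integrable_of_hasCompactSupport (hasCompactSupport_of_lt_abs hsdf)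
  have hint_df : ∫ x, deriv f x = 0 :=
    integral_eq_zero_of_hasDerivAt_of_integrable
      (fun x => (hf.differentiable one_ne_zero x).hasDerivAt) hidf
      (hf.continuous.integrable_of_hasCompactSupport (hasCompactSupport_of_lt_abs hsf))
  have hsupp : ∀ y, 0 < deriv f y + g y → |y| ≤ R := fun y hy => by
    by_contra! h
    rw [hsdf y h, hsg y h, add_zero] at hy
    exact hy.false
  obtain ⟨x₀, hx₀⟩ : ∃ x₀, 0 < deriv f x₀ + g x₀ := by
    by_contra! h
    have := integral_nonpos (μ := volume) h
    rw [integral_add hidf (hg.integrable_of_hasCompactSupport (hasCompactSupport_of_lt_abs hsg)),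
      hint_df, zero_add] at this
    linarith
  obtain ⟨δ, hδ, hball⟩ := Metric.eventually_nhds_iff.mp
    ((hdf.add hg).continuousAt.eventually_const_lt (half_lt_self hx₀))
  have hI : ∀ y ∈ Icc (x₀ - δ / 2) (x₀ + δ / 2), (deriv f x₀ + g x₀) / 2 < deriv f y + g y :=
    fun y hy => hball (by rw [Real.dist_eq, abs_lt]; constructor <;> linarith [hy.1, hy.2])
  refine ⟨x₀ - δ / 2, x₀ + δ / 2, (deriv f x₀ + g x₀) / 2, by linarith, by linarith,
    (abs_le.mp (hsupp _ ?_)).1, (abs_le.mp (hsupp _ ?_)).2, fun y hy => (hI y hy).le⟩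
  · exact (half_pos hx₀).trans (hI _ ⟨le_rfl, by linarith⟩)
  · exact (half_pos hx₀).trans (hI _ ⟨by linarith, le_rfl⟩)

end Data

lemma integral_log_div_rpow_div {K X e : ℝ} (hK : 0 < K) (hKX : K ≤ X) (he : 0 ≤ e) :
    ∫ τ in K..X, Real.log (τ / K) ^ e / τ = Real.log (X / K) ^ (e + 1) / (e + 1) := by
  have hderiv : ∀ τ ∈ uIcc K X, HasDerivAt (fun τ => Real.log (τ / K) ^ (e + 1) / (e + 1))
      (Real.log (τ / K) ^ e / τ) τ := by
    intro τ hτ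
    rw [uIcc_of_le hKX] at hτ
    have hτ0 : 0 < τ := hK.trans_le hτ.1
    have hlog := ((hasDerivAt_id τ).div_const K).log (by positivity)
    refine ((hlog.rpow_const (p := e + 1) (Or.inr (by linarith))).div_const (e + 1)).congr_deriv ?_
    rw [add_sub_cancel_right, id]
    field_simp
  have hint : IntervalIntegrable (fun τ => Real.log (τ / K) ^ e / τ) volume K X := by
    refine intervalIntegral.intervalIntegrable_deriv_of_nonneg
      (fun τ hτ => (hderiv τ hτ).continuousAt.continuousWithinAt)
      (fun τ hτ => hderiv τ (Ioo_subset_Icc_self hτ)) fun τ hτ => ?_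
    rw [min_eq_left hKX] at hτ
    have hτ0 : 0 < τ := hK.trans hτ.1
    exact div_nonneg (Real.rpow_nonneg (Real.log_nonneg ((one_le_div hK).mpr hτ.1.le)) _) hτ0.le
  rw [intervalIntegral.integral_eq_sub_of_hasDerivAt hderiv hint, div_self hK.ne', Real.log_one,
    Real.zero_rpow (by linarith), zero_div, sub_zero]

lemma le_rpow_div_kernelDenom {p a b N L k X y s u : ℝ} (hp : 0 < p) (ha : 0 ≤ 1 + a)
    (hb : 1 + b ≤ 0) (hab : p * (1 + a) + b = 0) (hN : 0 ≤ N) (hL : 0 ≤ L)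
    (hys : 2 ≤ s - |y|) (hX : |s| + |y| + 2 ≤ 2 * X)
    (hu : N * L ^ k / (s - |y|) ^ (1 + a) ≤ u) :
    2 ^ (1 + b) * N ^ p * L ^ (k * p) / ((2 * X) ^ (1 + a) * (s - |y|)) ≤
      |u| ^ p / kernelDenom a b y s := by
  set τ := s - |y|
  have hτ : 0 < τ := by linarith
  have hX0 : 0 < 2 * X := by linarith [abs_nonneg s, abs_nonneg y]
  have hτp : τ ^ (p * (1 + a)) * τ ^ (1 + b) = τ := by
    rw [← Real.rpow_add hτ, show p * (1 + a) + (1 + b) = 1 by linarith, Real.rpow_one]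
  have hker : kernelDenom a b y s ≤ (2 * X) ^ (1 + a) * (τ / 2) ^ (1 + b) :=
    (kernelDenom_le_of_two_le ha hb hys).trans (mul_le_mul_of_nonneg_right
      (Real.rpow_le_rpow (by positivity) hX ha) (by positivity))
  calc 2 ^ (1 + b) * N ^ p * L ^ (k * p) / ((2 * X) ^ (1 + a) * τ)
      = (N * L ^ k / τ ^ (1 + a)) ^ p / ((2 * X) ^ (1 + a) * (τ / 2) ^ (1 + b)) := by
        rw [Real.div_rpow (by positivity) (by positivity), Real.mul_rpow hN (by positivity),
          ← Real.rpow_mul hL, ← Real.rpow_mul hτ.le, Real.div_rpow hτ.le zero_le_two]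
        field_simp
        linear_combination N ^ p * L ^ (k * p) * hτp
    _ ≤ |u| ^ p / kernelDenom a b y s :=
        div_le_div₀ (by positivity) (Real.rpow_le_rpow (by positivity)
          (hu.trans (le_abs_self u)) hp.le) (kernelDenom_pos a b y s) hker

/-- Applied to `fun x t => U (-x) t`, this is the mirror-image bound on `x ≤ 0`. -/
def HasLogLowerBound (a K T N k : ℝ) (U : ℝ → ℝ → ℝ) : Prop :=
  ∀ x t : ℝ, 0 ≤ x → K ≤ t - x → t ≤ T →
    N * Real.log ((t - x) / K) ^ k / (t - x) ^ (1 + a) ≤ U x t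

section LowerBounds

variable {p a b R ε T : ℝ} {f g : ℝ → ℝ} {U : ℝ → ℝ → ℝ}

noncomputable def stepConst (a b : ℝ) : ℝ := 2 ^ (1 + b) / (4 * 2 ^ (1 + a))

lemma stepConst_pos (a b : ℝ) : 0 < stepConst a b := by
  unfold stepConst; positivity

theorem IsIntSol.hasLogLowerBound_zero (hp : 0 < p) (ha : 0 ≤ 1 + a) (hb : 1 + b ≤ 0)
    (hU : IsIntSol p a b R ε T f g U) (hsf : ∀ x : ℝ, R < |x| → f x = 0)
    (hsg : ∀ x : ℝ, R < |x| → g x = 0) (hε : 0 ≤ ε) {y₁ y₂ c : ℝ} (hy : y₁ ≤ y₂) (hc : 0 ≤ c)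
    (hy₁ : -R ≤ y₁) (hy₂ : y₂ ≤ R) (hfg : ∀ y ∈ Icc y₁ y₂, c ≤ deriv f y + g y) :
    HasLogLowerBound a (3 * R + 3) T ((y₂ - y₁) * (c / 2) ^ p / (4 * 2 ^ (1 + a)) * ε ^ p) 0 U := by
  intro x t hx hK hT
  set X := t - x
  -- on this interval the foot `y + s` of the characteristic `y = x - t + s` sweeps `[y₁, y₂]`
  have hs : ∀ s ∈ Icc ((y₁ + X) / 2) ((y₂ + X) / 2),
      (ε * (c / 2)) ^ p / (2 * X) ^ (1 + a) ≤
        |U (x - t + s) s| ^ p / kernelDenom a b (x - t + s) s := by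
    intro s ⟨hs₁, hs₂⟩
    have hut : c / 2 ≤ ut0 f g (x - t + s) s := by
      rw [ut0_eq_of_sub_lt hsf hsg (by linarith)]
      linarith [hfg (x - t + s + s) ⟨by linarith, by linarith⟩]
    have hU' : ε * (c / 2) ≤ U (x - t + s) s :=
      (mul_le_mul_of_nonneg_left hut hε).trans (hU.mul_ut0_le (by linarith) (by linarith))
    have hker : kernelDenom a b (x - t + s) s ≤ (2 * X) ^ (1 + a) := by
      refine (kernelDenom_le ha hb _ _).trans (Real.rpow_le_rpow (by positivity) ?_ ha)
      rw [abs_of_nonneg (by linarith), abs_of_nonpos (by linarith)]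
      linarith
    exact div_le_div₀ (by positivity) (Real.rpow_le_rpow (mul_nonneg hε (by linarith))
      (hU'.trans (le_abs_self _)) hp.le) (kernelDenom_pos _ _ _ _) hker
  have hz : ut0 f g x t = 0 := ut0_eq_zero hsf hsg (by linarith) (by linarith)
  have key := hU.integral_le hp hz (by linarith) (by linarith) (by linarith) hT
    (fun s _ => div_nonneg (Real.rpow_nonneg (mul_nonneg hε (by linarith)) _)
      (Real.rpow_nonneg (by linarith) _)) hs
  rw [intervalIntegral.integral_const, smul_eq_mul] at key
  refine le_of_eq_of_le ?_ key
  rw [Real.rpow_zero, mul_one, Real.mul_rpow hε (by linarith),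
    Real.mul_rpow zero_le_two (by linarith)]
  field_simp
  ring

theorem IsIntSol.hasLogLowerBound_succ (hp : 0 < p) (ha : 0 ≤ 1 + a) (hb : 1 + b ≤ 0)
    (hab : p * (1 + a) + b = 0) (hU : IsIntSol p a b R ε T f g U)
    (hsf : ∀ x : ℝ, R < |x| → f x = 0) (hsg : ∀ x : ℝ, R < |x| → g x = 0) {K N k : ℝ}
    (hK : 2 ≤ K) (hRK : R < K) (hN : 0 ≤ N) (hk : 0 ≤ k)
    (h : HasLogLowerBound a K T N k fun y s => U (-y) s) :
    HasLogLowerBound a K T (stepConst a b * N ^ p / (k * p + 1)) (k * p + 1) U := by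
  intro x t hx hKX hT
  set X := t - x
  set C := 2 ^ (1 + b) * N ^ p / (2 * X) ^ (1 + a)
  set ψ : ℝ → ℝ := fun τ => Real.log (τ / K) ^ (k * p) / τ
  -- on this interval `y = x - t + s ≤ 0` and `y + s = 2 s - X ∈ [K, X]`: the mirror bound applies
  have hs : ∀ s ∈ Icc ((X + K) / 2) X,
      C * ψ (2 * s - X) ≤ |U (x - t + s) s| ^ p / kernelDenom a b (x - t + s) s := by
    intro s ⟨hs₁, hs₂⟩
    have hy : |x - t + s| = X - s := by rw [abs_of_nonpos (by linarith)]; ring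
    have hτ : s - |x - t + s| = 2 * s - X := by rw [hy]; ring
    have hbound := h (-(x - t + s)) s (by linarith) (by linarith) (by linarith)
    rw [show s - -(x - t + s) = s - |x - t + s| by rw [hy]; ring] at hbound
    simp only [neg_neg] at hbound
    have := le_rpow_div_kernelDenom (X := X) hp ha hb hab hN
      (Real.log_nonneg ((one_le_div (by linarith)).mpr (by linarith))) (by linarith)
      (by rw [hy, abs_of_nonneg (by linarith)]; linarith) hbound
    rw [hτ] at this
    refine le_of_eq_of_le ?_ this
    simp only [C, ψ]
    field_simp
  have hz : ut0 f g x t = 0 := ut0_eq_zero hsf hsg (by linarith) (by linarith)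
  have hC : 0 ≤ C := div_nonneg (mul_nonneg (by positivity) (Real.rpow_nonneg hN _))
    (Real.rpow_nonneg (by linarith) _)
  have key := hU.integral_le hp hz (by linarith) (by linarith) (by linarith) hT
    (fun s ⟨hs₁, _⟩ => mul_nonneg hC (div_nonneg (Real.rpow_nonneg
      (Real.log_nonneg ((one_le_div (by linarith)).mpr (by linarith))) _) (by linarith))) hs
  rw [intervalIntegral.integral_const_mul, intervalIntegral.integral_comp_mul_sub _ two_ne_zero,
    show 2 * ((X + K) / 2) - X = K by ring, show 2 * X - X = X by ring,
    integral_log_div_rpow_div (by linarith) hKX (by positivity), smul_eq_mul] at key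
  refine le_of_eq_of_le ?_ key
  simp only [C, stepConst]
  rw [Real.mul_rpow zero_le_two (by linarith)]
  field_simp
  ring

noncomputable def boundSeq (c p N₀ : ℝ) : ℕ → ℝ × ℝ
  | 0 => (N₀, 0)
  | m + 1 => (c * (boundSeq c p N₀ m).1 ^ p / ((boundSeq c p N₀ m).2 * p + 1),
      (boundSeq c p N₀ m).2 * p + 1)

section BoundSeq

variable {c p N₀ : ℝ}

lemma boundSeq_snd (hp : p ≠ 1) (m : ℕ) : (boundSeq c p N₀ m).2 = (p ^ m - 1) / (p - 1) := by
  have hp' : p - 1 ≠ 0 := sub_ne_zero.mpr hp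
  induction m with
  | zero => simp [boundSeq]
  | succ m ih => rw [boundSeq, ih, pow_succ]; field_simp; ring

lemma boundSeq_snd_nonneg (hp : 0 ≤ p) (m : ℕ) : 0 ≤ (boundSeq c p N₀ m).2 := by
  induction m with
  | zero => simp [boundSeq]
  | succ m ih => rw [boundSeq]; positivity

lemma boundSeq_fst_pos (hc : 0 < c) (hp : 0 ≤ p) (hN₀ : 0 < N₀) (m : ℕ) :
    0 < (boundSeq c p N₀ m).1 := by
  induction m with
  | zero => exact hN₀
  | succ m ih =>
    have := boundSeq_snd_nonneg (c := c) (N₀ := N₀) hp m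
    rw [boundSeq]
    exact div_pos (mul_pos hc (Real.rpow_pos_of_pos ih p)) (by positivity)

end BoundSeq

/-- With `D = G / (p - 1)` and `A = (B + D) / (p - 1)`, the sequence `z m - A - D m` grows at least
like `p ^ m`. -/
lemma tendsto_atTop_of_mul_sub_le {p B G : ℝ} {z : ℕ → ℝ} (hp : 1 < p) (hG : 0 ≤ G)
    (hz : ∀ m : ℕ, p * z m - (B + G * m) ≤ z (m + 1))
    (h₀ : (B + G / (p - 1)) / (p - 1) < z 0) : Tendsto z atTop atTop := by
  have hp1 : p - 1 ≠ 0 := by linarith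
  set D := G / (p - 1)
  set A := (B + D) / (p - 1)
  have hD : p * D = D + G := by simp only [D]; field_simp; ring
  have hA : p * A = A + B + D := by simp only [A]; field_simp; ring
  have hD₀ : 0 ≤ D := div_nonneg hG (by linarith)
  clear_value A D
  have hw : ∀ m : ℕ, p ^ m * (z 0 - A) ≤ z m - A - D * m := by
    intro m
    induction m with
    | zero => simp
    | succ m ih =>
      have := mul_le_mul_of_nonneg_left ih (by linarith : (0:ℝ) ≤ p)
      push_cast
      linear_combination this + hz m - hA - (m : ℝ) * hD
  have hlim : Tendsto (fun m : ℕ => A + p ^ m * (z 0 - A)) atTop atTop :=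
    tendsto_atTop_add_const_left _ _
      ((tendsto_pow_atTop_atTop_of_one_lt hp).atTop_mul_const (by linarith))
  refine tendsto_atTop_mono (fun m => ?_) hlim
  have := hw m
  have : 0 ≤ D * m := mul_nonneg hD₀ m.cast_nonneg
  linarith

lemma tendsto_boundSeq {c p N₀ : ℝ} (hp : 1 < p) (hc : 0 < c) (hN₀ : 0 < N₀) (ℓ : ℝ)
    (h₀ : (Real.log p - Real.log (p - 1) - Real.log c + Real.log p / (p - 1)) / (p - 1) <
      Real.log N₀ + ℓ / (p - 1)) :
    Tendsto (fun m => Real.log (boundSeq c p N₀ m).1 + ((boundSeq c p N₀ m).2 + 1 / (p - 1)) * ℓ)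
      atTop atTop := by
  have hp1 : 0 < p - 1 := by linarith
  refine tendsto_atTop_of_mul_sub_le (B := Real.log p - Real.log (p - 1) - Real.log c) hp
    (Real.log_nonneg hp.le) (fun m => ?_) (h₀.trans_eq (by simp only [boundSeq]; ring))
  have hN := boundSeq_fst_pos hc (by linarith : (0:ℝ) ≤ p) hN₀ m
  have hk := boundSeq_snd_nonneg (c := c) (N₀ := N₀) (by linarith : (0:ℝ) ≤ p) m
  have hkp : 0 < (boundSeq c p N₀ m).2 * p + 1 := by positivity
  have hlog :
      Real.log ((boundSeq c p N₀ m).2 * p + 1) ≤ (m + 1) * Real.log p - Real.log (p - 1) := by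
    rw [← Nat.cast_succ, ← Real.log_pow, ← Real.log_div (by positivity) hp1.ne']
    refine Real.log_le_log hkp ?_
    rw [boundSeq_snd hp.ne', le_div_iff₀ hp1, pow_succ]
    field_simp
    linarith
  simp only [boundSeq]
  rw [Real.log_div (by positivity) hkp.ne', Real.log_mul hc.ne' (by positivity),
    Real.log_rpow hN]
  have : ((boundSeq c p N₀ m).2 * p + 1 + 1 / (p - 1)) * ℓ =
      p * (((boundSeq c p N₀ m).2 + 1 / (p - 1)) * ℓ) := by field_simp; ring
  rw [this]
  linarith

section Iteration

variable {p a b R ε T : ℝ} {f g : ℝ → ℝ} {U : ℝ → ℝ → ℝ}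

/-- Each step of the iteration trades the bound on one side of the light cone for a bound on the
other side, so the bounds alternate between `U` and its mirror image. -/
theorem IsIntSol.hasLogLowerBound_boundSeq (hp : 0 < p) (ha : 0 ≤ 1 + a) (hb : 1 + b ≤ 0)
    (hab : p * (1 + a) + b = 0) (hU : IsIntSol p a b R ε T f g U)
    (hsf : ∀ x : ℝ, R < |x| → f x = 0) (hsg : ∀ x : ℝ, R < |x| → g x = 0) {K N₀ : ℝ}
    (hK : 2 ≤ K) (hRK : R < K) (hN₀ : 0 < N₀) (h₀ : HasLogLowerBound a K T N₀ 0 U) (m : ℕ) :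
    HasLogLowerBound a K T (boundSeq (stepConst a b) p N₀ m).1
        (boundSeq (stepConst a b) p N₀ m).2 U ∨
      HasLogLowerBound a K T (boundSeq (stepConst a b) p N₀ m).1
        (boundSeq (stepConst a b) p N₀ m).2 fun y s => U (-y) s := by
  induction m with
  | zero => exact Or.inl h₀
  | succ m ih =>
    have hN := (boundSeq_fst_pos (stepConst_pos a b) hp.le hN₀ m).le
    have hk := boundSeq_snd_nonneg (c := stepConst a b) (N₀ := N₀) hp.le m
    rcases ih with h | h
    · refine Or.inr (hU.comp_neg.hasLogLowerBound_succ hp ha hb hab ?_ ?_ hK hRK hN hk ?_)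
      · exact fun x hx => hsf (-x) (by rwa [abs_neg])
      · exact fun x hx => hsg (-x) (by rwa [abs_neg])
      · simpa only [neg_neg] using h
    · exact Or.inl (hU.hasLogLowerBound_succ hp ha hb hab hsf hsg hK hRK hN hk h)

end Iteration

lemma HasLogLowerBound.log_le {a K T N k : ℝ} {U : ℝ → ℝ → ℝ}
    (h : HasLogLowerBound a K T N k U) (hN : 0 < N) (hK : 0 < K) (hKT : K < T) :
    Real.log N + k * Real.log (Real.log (T / K)) - (1 + a) * Real.log T ≤ Real.log (U 0 T) := by
  have hL : 0 < Real.log (T / K) := Real.log_pos ((one_lt_div hK).mpr hKT)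
  have hT : 0 < T := hK.trans hKT
  have hUT := h 0 T le_rfl (by rw [sub_zero]; exact hKT.le) le_rfl
  rw [sub_zero] at hUT
  set L := Real.log (T / K)
  have hpos : 0 < N * L ^ k / T ^ (1 + a) := by positivity
  calc _ = Real.log (N * L ^ k / T ^ (1 + a)) := by
        rw [Real.log_div (by positivity) (by positivity), Real.log_mul hN.ne' (by positivity),
          Real.log_rpow hL, Real.log_rpow hT]
    _ ≤ Real.log (U 0 T) := Real.log_le_log hpos hUT

lemma lt_log_div_of_exp_le {C K ε T μ : ℝ} (hK : 1 ≤ K) (hε : 0 < ε) (hε₁ : ε ≤ 1) (hμ : μ ≤ 0)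
    (hT : Real.exp ((C + Real.log K + 1) * ε ^ μ) ≤ T) : C * ε ^ μ < Real.log (T / K) := by
  have hεμ : 1 ≤ ε ^ μ := Real.one_le_rpow_of_pos_of_le_one_of_nonpos hε hε₁ hμ
  have hlogT : (C + Real.log K + 1) * ε ^ μ ≤ Real.log T := by
    rw [← Real.log_exp ((C + Real.log K + 1) * ε ^ μ)]
    exact Real.log_le_log (Real.exp_pos _) hT
  have hK₀ : 0 ≤ Real.log K := Real.log_nonneg hK
  have := le_mul_of_one_le_right (by linarith : 0 ≤ Real.log K + 1) hεμ
  rw [Real.log_div ((Real.exp_pos _).trans_le hT).ne' (by linarith)]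
  nlinarith

theorem IsIntSol.false_of_hasLogLowerBound {p a b R ε T : ℝ} {f g : ℝ → ℝ} {U : ℝ → ℝ → ℝ}
    (hp : 1 < p) (ha : 0 ≤ 1 + a) (hb : 1 + b ≤ 0) (hab : p * (1 + a) + b = 0)
    (hU : IsIntSol p a b R ε T f g U) (hsf : ∀ x : ℝ, R < |x| → f x = 0)
    (hsg : ∀ x : ℝ, R < |x| → g x = 0) {K N₀ : ℝ} (hK : 2 ≤ K) (hRK : R < K) (hKT : K < T)
    (hN₀ : 0 < N₀) (h₀ : HasLogLowerBound a K T N₀ 0 U)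
    (hℓ : (Real.log p - Real.log (p - 1) - Real.log (stepConst a b) +
        Real.log p / (p - 1)) / (p - 1) < Real.log N₀ + Real.log (Real.log (T / K)) / (p - 1)) :
    False := by
  set c := stepConst a b
  set ℓ := Real.log (Real.log (T / K))
  obtain ⟨m, hm⟩ := ((tendsto_boundSeq hp (stepConst_pos a b) hN₀ ℓ hℓ).eventually_gt_atTop
    (Real.log (U 0 T) + (1 + a) * Real.log T + ℓ / (p - 1))).exists
  have hN := boundSeq_fst_pos (stepConst_pos a b) (by linarith : (0:ℝ) ≤ p) hN₀ m
  have hUT : Real.log (boundSeq c p N₀ m).1 + (boundSeq c p N₀ m).2 * ℓ - (1 + a) * Real.log T ≤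
      Real.log (U 0 T) := by
    rcases hU.hasLogLowerBound_boundSeq (by linarith) ha hb hab hsf hsg hK hRK hN₀ h₀ m with h | h
    · exact h.log_le hN (by linarith) hKT
    · simpa only [neg_zero] using h.log_le hN (by linarith) hKT
  have : ((boundSeq c p N₀ m).2 + 1 / (p - 1)) * ℓ = (boundSeq c p N₀ m).2 * ℓ + ℓ / (p - 1) := by
    ring
  linarith

theorem blow_up_critical_line_general (p a b R : ℝ) (f g : ℝ → ℝ)
    (hp : 1 < p) (ha : 0 < a) (hab : p * (1 + a) + b = 0)
    (hf : ContDiff ℝ 2 f) (hg : ContDiff ℝ 1 g)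
    (hsf : ∀ x : ℝ, R < |x| → f x = 0) (hsg : ∀ x : ℝ, R < |x| → g x = 0) (hgint : 0 < ∫ x : ℝ, g x) :
    ∃ ε₂ : ℝ, 0 < ε₂ ∧ ∃ C : ℝ, 0 < C ∧ ∀ ε : ℝ, 0 < ε → ε ≤ ε₂ →
      ∀ T : ℝ, Real.exp (C * ε ^ (-(p * (p - 1)))) ≤ T →
        ¬ ∃ U : ℝ → ℝ → ℝ, IsIntSol p a b R ε T f g U := by
  obtain ⟨y₁, y₂, c, hy, hc, hy₁, hy₂, hfg⟩ :=
    exists_Icc_le_deriv_add hsf hsg (hf.of_le (by norm_num)) hg.continuous hgint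
  have hb : 1 + b ≤ 0 := by nlinarith
  set α := (y₂ - y₁) * (c / 2) ^ p / (4 * 2 ^ (1 + a))
  set B := Real.log p - Real.log (p - 1) - Real.log (stepConst a b) +
    Real.log p / (p - 1)
  refine ⟨1, one_pos, Real.exp (B - (p - 1) * Real.log α) + Real.log (3 * R + 3) + 1,
    by have := Real.log_nonneg (by linarith : (1:ℝ) ≤ 3 * R + 3); positivity, ?_⟩
  rintro ε hε hε₁ T hT ⟨U, hU⟩
  have hα : 0 < α := div_pos (mul_pos (by linarith) (by positivity)) (by positivity)
  have hL := lt_log_div_of_exp_le (by linarith) hε hε₁ (by nlinarith) hT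
  have hL₀ : 0 < Real.exp (B - (p - 1) * Real.log α) * ε ^ (-(p * (p - 1))) := by positivity
  have hKT : 3 * R + 3 < T := by
    have hT₀ : 0 < T := (Real.exp_pos _).trans_le hT
    have := (Real.log_pos_iff (div_nonneg hT₀.le (by linarith))).mp (hL₀.trans hL)
    rwa [one_lt_div (by linarith)] at this
  refine hU.false_of_hasLogLowerBound hp (by linarith) hb hab hsf hsg (by linarith) (by linarith)
    hKT (by positivity) (hU.hasLogLowerBound_zero (by linarith) (by linarith) hb hsf hsg hε.le
      hy.le hc.le hy₁ hy₂ hfg) ?_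
  have hℓ := Real.log_lt_log hL₀ hL
  rw [Real.log_mul (by positivity) (by positivity), Real.log_exp, Real.log_rpow hε] at hℓ
  rw [Real.log_mul hα.ne' (by positivity), Real.log_rpow hε, div_lt_iff₀ (by linarith), add_mul,
    div_mul_cancel₀ _ (by linarith)]
  linarith

theorem blow_up_critical_line (p a b R : ℝ) (f g : ℝ → ℝ)
    (hp : 1 < p) (ha : 0 < a) (hab : p * (1 + a) + b = 0)
    (hR : 1 ≤ R) (hf : ContDiff ℝ 2 f) (hg : ContDiff ℝ 1 g)
    (hsf : ∀ x : ℝ, R < |x| → f x = 0) (hsg : ∀ x : ℝ, R < |x| → g x = 0) (hgint : 0 < ∫ x : ℝ, g x) :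
    ∃ ε₂ : ℝ, 0 < ε₂ ∧ ∃ C : ℝ, 0 < C ∧ ∀ ε : ℝ, 0 < ε → ε ≤ ε₂ →
      ∀ T : ℝ, Real.exp (C * ε ^ (-(p * (p - 1)))) ≤ T →
        ¬ ∃ U : ℝ → ℝ → ℝ, IsIntSol p a b R ε T f g U :=
  blow_up_critical_line_general p a b R f g hp ha hab hf hg hsf hsg hgint
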